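/- arXiv:2310.11172 — 2 statements merged into one kernel-verified Lean document; each statement's English description precedes it below -/
import Mathlib

section
/- Let D be an abelian category with enough projectives and enough injectives, let X be a class of objects of D closed under isomorphisms, let D be an object of D and let n ≥ 0 be an integer. Then the following are equivalent: (1) X^⊥-cores D ≤ n; (2) Ext^{n+k}(X, D) = 0 for every X in X and every k ≥ 1; (3) whenever 0 → D → Y_0 → ⋯ → Y_{n-1} → Y_n → 0 is an exact sequence with Y_0, …, Y_{n-1} in X^⊥, the object Y_n lies in X^⊥. -/
/-!
Every short exact sequence `0 → K → Y → L → 0` with `Y ∈ X^⊥` gives, through the long exact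
`Ext(A, -)` sequence, `Ext^i(A, L) ≅ Ext^{i+1}(A, K)` for `A ∈ X` and `i ≥ 1`. Iterating along a
coresolution `0 → D → Y₀ → ⋯ → Y_{m-1} → Z → 0` by objects of `X^⊥` gives
`Ext^i(A, Z) = 0 ↔ Ext^{i+m}(A, D) = 0`. This yields (1) ⇒ (2) ⇒ (3), and (3) ⇒ (1) because `D`
has an injective coresolution and injective objects lie in `X^⊥`.
-/

open CategoryTheory CategoryTheory.Limits

universe w v u

namespace Paper

variable {D : Type u} [Category.{v} D] [Abelian D]

section
variable [HasExt.{w} D]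

/-- The right perpendicular class `X^⊥` of a class of objects:
objects `M` with `Ext^i(A, M) = 0` for all `A` in the class and all `i ≥ 1`. -/
def perp (X : D → Prop) : D → Prop :=
  fun M => ∀ A, X A → ∀ i : ℕ, 1 ≤ i → Subsingleton (Abelian.Ext A M i)

end

/-- `CoresSeq W n M Z` : there is an exact sequence
`0 → M → W₀ → ⋯ → W_{n-1} → Z → 0` with each `Wᵢ` in `W`. -/
def CoresSeq (W : D → Prop) : ℕ → D → D → Prop
  | 0, M, Z => Nonempty (M ≅ Z)
  | n + 1, M, Z => ∃ (W₀ K : D) (f : M ⟶ W₀) (g : W₀ ⟶ K) (h : f ≫ g = 0),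
      W W₀ ∧ (ShortComplex.mk f g h).ShortExact ∧ CoresSeq W n K Z

/-- The `W`-coresolution dimension of an object, valued in `ℕ∞`:
the least `n` such that there is an exact sequence `0 → M → W₀ → ⋯ → Wₙ → 0`
with all `Wᵢ` in `W` (and `∞` if there is no such sequence). -/
noncomputable def coresDim (W : D → Prop) (M : D) : ℕ∞ :=
  sInf {n : ℕ∞ | ∃ m : ℕ, n = (m : ℕ∞) ∧ ∃ Z, W Z ∧ CoresSeq W m M Z}

lemma coresDim_le_iff (W : D → Prop) (M : D) (n : ℕ) :
    coresDim W M ≤ n ↔ ∃ m ≤ n, ∃ Z, W Z ∧ CoresSeq W m M Z := by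
  constructor
  · intro hle
    have hne : {n : ℕ∞ | ∃ m : ℕ, n = (m : ℕ∞) ∧ ∃ Z, W Z ∧ CoresSeq W m M Z}.Nonempty := by
      by_contra h
      rw [Set.not_nonempty_iff_eq_empty] at h
      rw [coresDim, h, sInf_empty, top_le_iff] at hle
      exact ENat.natCast_ne_top n hle
    obtain ⟨m, hm, hseq⟩ := csInf_mem hne
    rw [coresDim, hm] at hle
    exact ⟨m, by exact_mod_cast hle, hseq⟩
  · rintro ⟨m, hmn, hseq⟩
    exact (sInf_le ⟨m, rfl, hseq⟩ : coresDim W M ≤ m).trans (by exact_mod_cast hmn)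

lemma exists_coresSeq_of_injective_mem [EnoughInjectives D] (W : D → Prop)
    (hW : ∀ Y : D, Injective Y → W Y) (n : ℕ) (M : D) : ∃ Z, CoresSeq W n M Z := by
  induction n generalizing M with
  | zero => exact ⟨M, ⟨Iso.refl M⟩⟩
  | succ n ih =>
    obtain ⟨Z, hZ⟩ := ih (cokernel (Injective.ι M))
    exact ⟨Z, Injective.under M, cokernel (Injective.ι M), Injective.ι M, cokernel.π _,
      cokernel.condition _, hW _ inferInstance,
      ⟨ShortComplex.exact_of_g_is_cokernel _ (cokernelIsCokernel (Injective.ι M))⟩, hZ⟩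

section Ext

variable [HasExt.{w} D]

open Abelian

lemma subsingleton_ext_congr_right {M Z : D} (e : M ≅ Z) (A : D) (i : ℕ) :
    Subsingleton (Ext.{w} A M i) ↔ Subsingleton (Ext.{w} A Z i) := by
  have transfer : ∀ {M Z : D} (e : M ≅ Z),
      Subsingleton (Ext.{w} A M i) → Subsingleton (Ext.{w} A Z i) := by
    intro M Z e h
    refine subsingleton_of_forall_eq 0 fun y => ?_
    have hy : (y.comp (Ext.mk₀ e.inv) (add_zero _)).comp (Ext.mk₀ e.hom) (add_zero _) = y := by
      rw [Ext.comp_assoc_of_second_deg_zero, Ext.mk₀_comp_mk₀, Iso.inv_hom_id, Ext.comp_mk₀_id]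
    rw [← hy, Subsingleton.elim (y.comp (Ext.mk₀ e.inv) (add_zero _)) 0, Ext.zero_comp]
  exact ⟨transfer e, transfer e.symm⟩

lemma subsingleton_ext_X₃_iff {S : ShortComplex D} (hS : S.ShortExact) (A : D) (i : ℕ)
    (h₂ : Subsingleton (Ext.{w} A S.X₂ i)) (h₂' : Subsingleton (Ext.{w} A S.X₂ (i + 1))) :
    Subsingleton (Ext.{w} A S.X₃ i) ↔ Subsingleton (Ext.{w} A S.X₁ (i + 1)) := by
  constructor
  · intro h₃
    refine subsingleton_of_forall_eq 0 fun y => ?_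
    obtain ⟨x₃, hx₃⟩ := Ext.covariant_sequence_exact₁ A hS y (Subsingleton.elim _ _) rfl
    rw [← hx₃, Subsingleton.elim x₃ 0, Ext.zero_comp]
  · intro h₁
    refine subsingleton_of_forall_eq 0 fun x => ?_
    obtain ⟨x₂, hx₂⟩ := Ext.covariant_sequence_exact₃ A hS x rfl (Subsingleton.elim _ _)
    rw [← hx₂, Subsingleton.elim x₂ 0, Ext.zero_comp]

lemma subsingleton_ext_iff_of_coresSeq {W : D → Prop} (A : D)
    (hW : ∀ Y, W Y → ∀ j : ℕ, 1 ≤ j → Subsingleton (Ext.{w} A Y j))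
    {m : ℕ} {M Z : D} (hseq : CoresSeq W m M Z) (i : ℕ) (hi : 1 ≤ i) :
    Subsingleton (Ext.{w} A Z i) ↔ Subsingleton (Ext.{w} A M (i + m)) := by
  induction m generalizing M with
  | zero => exact (subsingleton_ext_congr_right hseq.some A i).symm
  | succ m ih =>
    obtain ⟨W₀, K, f, g, _, hW₀, hS, hseq⟩ := hseq
    exact (ih hseq).trans (subsingleton_ext_X₃_iff hS A (i + m)
      (hW W₀ hW₀ _ (by omega)) (hW W₀ hW₀ _ (by omega)))

lemma perp_of_injective (X : D → Prop) (Y : D) [Injective Y] : perp X Y := by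
  intro A _ i hi
  obtain ⟨j, rfl⟩ := Nat.exists_eq_add_of_le' hi
  exact Ext.subsingleton_of_injective A Y j

end Ext

theorem stmt_0_general [EnoughInjectives D] [HasExt.{w} D]
    (X : D → Prop)
    (M : D) (n : ℕ) :
    (coresDim (perp X) M ≤ (n : ℕ∞) ↔
      ∀ A, X A → ∀ k : ℕ, 1 ≤ k → Subsingleton (Abelian.Ext A M (n + k))) ∧
    (coresDim (perp X) M ≤ (n : ℕ∞) ↔
      ∀ Z : D, CoresSeq (perp X) n M Z → perp X Z) := by
  have h12 : coresDim (perp X) M ≤ n →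
      ∀ A, X A → ∀ k : ℕ, 1 ≤ k → Subsingleton (Abelian.Ext A M (n + k)) := by
    intro hle A hA k hk
    obtain ⟨m, hmn, Z, hZ, hseq⟩ := (coresDim_le_iff _ M n).1 hle
    have := (subsingleton_ext_iff_of_coresSeq A (fun Y hY => hY A hA) hseq (n + k - m)
      (by omega)).1 (hZ A hA _ (by omega))
    rwa [show n + k - m + m = n + k by omega] at this
  have h23 : (∀ A, X A → ∀ k : ℕ, 1 ≤ k → Subsingleton (Abelian.Ext A M (n + k))) →
      ∀ Z : D, CoresSeq (perp X) n M Z → perp X Z := by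
    intro h2 Z hseq A hA i hi
    exact (subsingleton_ext_iff_of_coresSeq A (fun Y hY => hY A hA) hseq i hi).2
      (add_comm n i ▸ h2 A hA i hi)
  have h31 : (∀ Z : D, CoresSeq (perp X) n M Z → perp X Z) → coresDim (perp X) M ≤ n := by
    intro h3
    obtain ⟨Z, hseq⟩ := exists_coresSeq_of_injective_mem (perp X)
      (fun Y _ => perp_of_injective X Y) n M
    exact (coresDim_le_iff _ M n).2 ⟨n, le_rfl, Z, h3 Z hseq, hseq⟩
  exact ⟨⟨h12, h31 ∘ h23⟩, ⟨h23 ∘ h12, h31⟩⟩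

/-- Lemma 3.2 : characterizations of `X^⊥`-coresolution dimension `≤ n`. -/
theorem stmt_0 [EnoughProjectives D] [EnoughInjectives D] [HasExt.{w} D]
    (X : D → Prop) (hX : ∀ A B : D, (A ≅ B) → X A → X B)
    (M : D) (n : ℕ) :
    (coresDim (perp X) M ≤ (n : ℕ∞) ↔
      ∀ A, X A → ∀ k : ℕ, 1 ≤ k → Subsingleton (Abelian.Ext A M (n + k))) ∧
    (coresDim (perp X) M ≤ (n : ℕ∞) ↔
      ∀ Z : D, CoresSeq (perp X) n M Z → perp X Z) :=
  stmt_0_general X M n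

end Paper
end

section
/- Let A and B be categories and let (i^*, i_*, i^!) be an adjoint triple of functors with i^* : B → A, i_* : A → B, i^! : B → A (i.e. i^* ⊣ i_* ⊣ i^!) such that i_* is fully faithful. Let X be a class of objects of B closed under isomorphisms such that i_*(i^*(X)) lies in X and i_*(i^!(X)) lies in X for every X in X. Then the classes i^*(X) and i^!(X) of objects of A coincide, where i^*(X) denotes the class of objects isomorphic to i^*(X) for some X in X and i^!(X) the class of objects isomorphic to i^!(X) for some X in X. -/
open CategoryTheory CategoryTheory.Limits

universe v₁ v₂ u₁ u₂

namespace Paper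

/-- The essential image of a class of objects under a functor. -/
def imageClass {D : Type u₁} {E : Type u₂} [Category.{v₁} D] [Category.{v₂} E]
    (F : D ⥤ E) (S : D → Prop) : E → Prop :=
  fun Y => ∃ M, S M ∧ Nonempty (F.obj M ≅ Y)

/-- Lemma 4.4 : for an adjoint triple `(i^*, i_*, i^!)` with `i_*` fully faithful,
if a class `X` (closed under isomorphisms) satisfies `i_* i^*(X) ⊆ X` and
`i_* i^!(X) ⊆ X`, then the classes `i^*(X)` and `i^!(X)` coincide. -/
theorem stmt_15 {𝒜 : Type u₁} {ℬ : Type u₂} [Category.{v₁} 𝒜] [Category.{v₂} ℬ]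
    (iStar : ℬ ⥤ 𝒜) (iIns : 𝒜 ⥤ ℬ) (iShriek : ℬ ⥤ 𝒜)
    (adj₁ : iStar ⊣ iIns) (adj₂ : iIns ⊣ iShriek)
    [iIns.Full] [iIns.Faithful]
    (X : ℬ → Prop) (hX : ∀ A B : ℬ, (A ≅ B) → X A → X B)
    (h₁ : ∀ M, X M → X (iIns.obj (iStar.obj M)))
    (h₂ : ∀ M, X M → X (iIns.obj (iShriek.obj M))) :
    imageClass iStar X = imageClass iShriek X := by
  haveI : IsIso adj₂.unit := inferInstance
  haveI : IsIso adj₁.counit := inferInstance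
  funext Y
  apply propext
  constructor
  · rintro ⟨M, hM, ⟨e⟩⟩
    refine ⟨iIns.obj (iStar.obj M), h₁ M hM, ⟨?_⟩⟩
    exact (asIso (adj₂.unit.app (iStar.obj M))).symm ≪≫ e
  · rintro ⟨M, hM, ⟨e⟩⟩
    refine ⟨iIns.obj (iShriek.obj M), h₂ M hM, ⟨?_⟩⟩
    exact (asIso (adj₁.counit.app (iShriek.obj M))) ≪≫ e

end Paper
end
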